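/- Define the vector field v : ℝ⁴ → ℝ⁴ by v(x) = (cosh x₃, sinh x₃, 0, 0), where x₃ is the fourth coordinate of x, and let e₀ = (1,0,0,0). Then: (a) v is a normalized timelike vector field, i.e. η(v(x), v(x)) = 1 and v(x)₀ > 0 for all x; (b) v is geodesic in flat Minkowski space, i.e. the derivative of v at any point x in the direction v(x) vanishes: (Dv)(x)(v(x)) = 0 (so that the integral curves of v are straight lines); and (c) the function x ↦ η(v(x), e₀) = cosh x₃ is unbounded on ℝ⁴. Hence v and the constant field e₀ are timelike geodesic unit vector fields which do not belong to the same Doppler class. -/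
import Mathlib


/-- The Minkowski form `η(u,v) = u₀v₀ − u₁v₁ − u₂v₂ − u₃v₃` on `ℝ⁴`. -/
def mink (u v : Fin 4 → ℝ) : ℝ := u 0 * v 0 - u 1 * v 1 - u 2 * v 2 - u 3 * v 3

/-- The vector field `v(x) = (cosh x₃, sinh x₃, 0, 0)` on Minkowski space. -/
noncomputable def vfield (x : Fin 4 → ℝ) : Fin 4 → ℝ :=
  ![Real.cosh (x 3), Real.sinh (x 3), 0, 0]

/-- The constant vector field `e₀ = (1,0,0,0)`. -/
def e0 : Fin 4 → ℝ := ![1, 0, 0, 0]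

noncomputable def vcurve (t : ℝ) : Fin 4 → ℝ := ![Real.cosh t, Real.sinh t, 0, 0]

lemma vcurve_diff : Differentiable ℝ vcurve := by
  rw [differentiable_pi]
  intro i
  fin_cases i <;> simp [vcurve] <;> fun_prop

/-- The vector field `v(x) = (cosh x₃, sinh x₃, 0, 0)` is (a) a normalized future-directed
timelike field, (b) geodesic in flat Minkowski space (its derivative in its own direction
vanishes), and (c) `x ↦ η(v(x), e₀) = cosh x₃` is unbounded: hence `v` and `e₀` are timelike
geodesic unit vector fields not belonging to the same Doppler class. -/
theorem statement18 :
    (∀ x : Fin 4 → ℝ, mink (vfield x) (vfield x) = 1 ∧ 0 < vfield x 0) ∧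
      (∀ x : Fin 4 → ℝ, fderiv ℝ vfield x (vfield x) = 0) ∧
      ¬ ∃ C : ℝ, ∀ x : Fin 4 → ℝ, mink (vfield x) e0 ≤ C := by
  refine ⟨fun x => ⟨?_, ?_⟩, fun x => ?_, ?_⟩
  · have h := Real.cosh_sq_sub_sinh_sq (x 3)
    simp only [mink, vfield, Matrix.cons_val_zero, Matrix.cons_val_one, Matrix.head_cons,
      Matrix.cons_val_two, Matrix.tail_cons, Matrix.cons_val_three]
    nlinarith [h]
  · simp [vfield, Real.cosh_pos]
  · have hproj : vfield = vcurve ∘ (ContinuousLinearMap.proj (R := ℝ)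
        (φ := fun _ : Fin 4 => ℝ) 3) := rfl
    rw [hproj, fderiv_comp x (vcurve_diff _)
      ((ContinuousLinearMap.proj (R := ℝ) (φ := fun _ : Fin 4 => ℝ) 3).differentiableAt)]
    have h3 : vfield x 3 = 0 := rfl
    simp only [ContinuousLinearMap.coe_comp', Function.comp_apply,
      ContinuousLinearMap.fderiv, ContinuousLinearMap.proj_apply]
    rw [show vcurve (x 3) 3 = 0 from rfl, map_zero]
  · rintro ⟨C, hC⟩
    have h := hC (fun _ => 2 * C)
    have hm : mink (vfield (fun _ => 2 * C)) e0 = Real.cosh (2 * C) := by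
      simp [mink, vfield, e0]
    rw [hm] at h
    have h1 : Real.exp (2 * C) / 2 ≤ Real.cosh (2 * C) := by
      rw [Real.cosh_eq]
      have := Real.exp_pos (-(2 * C))
      linarith
    have h2 : 2 * C + 1 ≤ Real.exp (2 * C) := Real.add_one_le_exp _
    linarith
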